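/- The elements W¹_k = -t^k(D + (k+1)/2) for k ∈ ℤ of the centrally extended Lie algebra 𝒟̂⁺ satisfy the Virasoro relations [W¹_m, W¹_n] = (m-n)W¹_{m+n} + δ_{m,-n}·((m³-m)/12)·C. -/

import Mathlib

/-!
The bracket of two homogeneous elements `t^r f(D)`, `t^s g(D)` is again homogeneous, so the
relation splits into a polynomial identity in degree `m + n`, which is linear in `D`, and the
cocycle value `Ψ(W¹_m, W¹_{-m})`. For `m ≥ 0` the summand of that cocycle is the square of the
deviation of `j ∈ {1, …, m}` from its mean `(m + 1) / 2`, whose sum is `(m³ - m) / 12`; the case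
`m < 0` reduces to it because `Ψ` is antisymmetric.
-/

open Polynomial

noncomputable abbrev DOp := ℤ →₀ Polynomial ℂ

/-- `(t^k f(D)) ⬝ (t^l g(D)) = t^{k+l} f(D+l) g(D)`. -/
noncomputable def DOp.mul (a b : DOp) : DOp :=
  a.sum fun k f => b.sum fun l g =>
    Finsupp.single (k + l) (f.comp (X + C (l : ℂ)) * g)

/-- `Ψ(t^r f(D), t^{-r} g(D)) = Σ_{-r ≤ j ≤ -1} f(j) g(j+r)` for `r ≥ 0`,
extended antisymmetrically, vanishing unless the weights sum to zero. -/
noncomputable def psiPair (r : ℤ) (f g : Polynomial ℂ) : ℂ :=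
  if 0 ≤ r then ∑ i ∈ Finset.range r.toNat, f.eval (-(i + 1 : ℂ)) * g.eval ((r : ℂ) - (i + 1))
  else -∑ i ∈ Finset.range (-r).toNat, g.eval (-(i + 1 : ℂ)) * f.eval ((-r : ℂ) - (i + 1))

noncomputable def Psi (a b : DOp) : ℂ :=
  a.sum fun k f => psiPair k f (b (-k))

/-- The centrally extended algebra `𝒟̂ = 𝒟 ⊕ ℂC`. -/
noncomputable abbrev DOpHat := DOp × ℂ

/-- The bracket of `𝒟̂`:
`[t^r f(D), t^s g(D)] = t^{r+s}(f(D+s)g(D) - f(D)g(D+r)) + Ψ(t^r f(D), t^s g(D))·C`. -/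
noncomputable def DOpHat.bracket (a b : DOpHat) : DOpHat :=
  (DOp.mul a.1 b.1 - DOp.mul b.1 a.1, Psi a.1 b.1)

/-- The element `W¹_k = -t^k (D + (k+1)/2)` of `𝒟̂⁺`. -/
noncomputable def W1 (k : ℤ) : DOpHat :=
  (Finsupp.single k (-(X + C (((k : ℂ) + 1) / 2))), 0)

/-- The central element `C`. -/
noncomputable def Cel : DOpHat := (0, 1)

open Finset

section Sums

variable {K : Type*} [Field K] [CharZero K]

theorem sum_range_succ_sub_sq (c : K) (N : ℕ) :
    ∑ i ∈ range N, ((i : K) + 1 - c) ^ 2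
      = N * (N + 1) * (2 * N + 1) / 6 - c * N * (N + 1) + N * c ^ 2 := by
  induction N with
  | zero => simp
  | succ N ih =>
    rw [sum_range_succ, ih]
    push_cast
    field_simp
    ring

theorem sum_range_succ_sub_mean_sq (N : ℕ) :
    ∑ i ∈ range N, ((i : K) + 1 - (N + 1) / 2) ^ 2 = ((N : K) ^ 3 - N) / 12 := by
  rw [sum_range_succ_sub_sq]
  field_simp
  ring

end Sums

theorem DOp.mul_single_single (k l : ℤ) (f g : ℂ[X]) :
    DOp.mul (Finsupp.single k f) (Finsupp.single l g)
      = Finsupp.single (k + l) (f.comp (X + C (l : ℂ)) * g) := by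
  simp [DOp.mul]

theorem psiPair_zero_right (k : ℤ) (f : ℂ[X]) : psiPair k f 0 = 0 := by
  unfold psiPair
  split_ifs <;> simp

theorem psiPair_neg_left {r : ℤ} (hr : 0 < r) (f g : ℂ[X]) :
    psiPair (-r) f g = -psiPair r g f := by
  simp [psiPair, hr.le, hr.not_ge]

theorem Psi_single_single (k l : ℤ) (f g : ℂ[X]) :
    Psi (Finsupp.single k f) (Finsupp.single l g) = if l = -k then psiPair k f g else 0 := by
  rw [Psi, Finsupp.sum_single_index (by simp [psiPair]), Finsupp.single_apply]
  split_ifs <;> simp [psiPair_zero_right]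

theorem DOpHat.bracket_single_single (r s : ℤ) (f g : ℂ[X]) (a b : ℂ) :
    DOpHat.bracket (Finsupp.single r f, a) (Finsupp.single s g, b)
      = (Finsupp.single (r + s) (f.comp (X + C (s : ℂ)) * g - g.comp (X + C (r : ℂ)) * f),
          if s = -r then psiPair r f g else 0) := by
  rw [DOpHat.bracket, DOp.mul_single_single, DOp.mul_single_single, Psi_single_single,
    add_comm s r, Finsupp.single_sub]

noncomputable def w1Poly (k : ℤ) : ℂ[X] := -(X + C (((k : ℂ) + 1) / 2))

theorem W1_eq (k : ℤ) : W1 k = (Finsupp.single k (w1Poly k), 0) := rfl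

theorem w1Poly_comm (m n : ℤ) :
    (w1Poly m).comp (X + C (n : ℂ)) * w1Poly n - (w1Poly n).comp (X + C (m : ℂ)) * w1Poly m
      = ((m : ℂ) - n) • w1Poly (m + n) := by
  apply Polynomial.funext
  intro x
  simp only [w1Poly, eval_sub, eval_mul, eval_comp, eval_smul, eval_neg, eval_add, eval_X,
    eval_C, smul_eq_mul, Int.cast_add]
  ring

theorem psiPair_w1Poly_natCast (N : ℕ) :
    psiPair N (w1Poly N) (w1Poly (-N)) = ((N : ℂ) ^ 3 - N) / 12 := by
  rw [← sum_range_succ_sub_mean_sq, psiPair, if_pos (Int.natCast_nonneg N), Int.toNat_natCast]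
  refine sum_congr rfl fun i _ => ?_
  simp only [w1Poly, eval_neg, eval_add, eval_X, eval_C, Int.cast_neg, Int.cast_natCast]
  ring

theorem psiPair_w1Poly (m : ℤ) :
    psiPair m (w1Poly m) (w1Poly (-m)) = ((m : ℂ) ^ 3 - m) / 12 := by
  obtain ⟨N, rfl | rfl⟩ := Int.eq_nat_or_neg m
  · exact psiPair_w1Poly_natCast N
  · rcases N.eq_zero_or_pos with rfl | hN
    · simp [psiPair]
    rw [psiPair_neg_left (by exact_mod_cast hN), neg_neg, psiPair_w1Poly_natCast]
    push_cast
    ring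

/-- the elements `W¹_k` satisfy the Virasoro relations
`[W¹_m, W¹_n] = (m-n) W¹_{m+n} + δ_{m,-n} ((m³-m)/12) C`. -/
theorem W1_Virasoro (m n : ℤ) :
    DOpHat.bracket (W1 m) (W1 n) =
      ((m : ℂ) - (n : ℂ)) • W1 (m + n) +
        (if m = -n then ((m : ℂ) ^ 3 - (m : ℂ)) / 12 else 0) • Cel := by
  rw [W1_eq, W1_eq, W1_eq, DOpHat.bracket_single_single, w1Poly_comm, Cel]
  refine Prod.ext (by split_ifs <;> simp) ?_
  have hnm : n = -m ↔ m = -n := by omega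
  by_cases h : m = -n
  · obtain rfl : n = -m := hnm.2 h
    simp [psiPair_w1Poly]
  · simp [h, hnm]
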